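/- Let (H,α) be a monoidal Hom-Hopf algebra over a commutative ring k and let (M,μ) be a left-covariant (H,α)-Hom-bimodule with left coaction ρ(m)=m₍₋₁₎⊗m₍₀₎. For u∈ᶜᵒᴴM and h∈H define u◁h := (S(h₁)·μ⁻¹(u))·α(h₂); then u◁h∈ᶜᵒᴴM. Moreover the k-linear map θ: H⊗ᶜᵒᴴM → M, θ(h⊗u)=h·u, is bijective with inverse ϑ(m)=m₍₋₁₎⊗S(m₍₀₎₍₋₁₎)·m₍₀₎₍₀₎, and it satisfies: θ(α⁻¹(g)h⊗μ(u)) = g·θ(h⊗u), θ(hl₁⊗(u◁l₂)) = θ(h⊗u)·l, and ρ(h·u) = α(h₁)⊗h₂·μ⁻¹(u), for all g,h,l∈H and u∈ᶜᵒᴴM; that is, θ is an isomorphism of left-covariant (H,α)-Hom-bimodules from H⊗ᶜᵒᴴM (with its canonical left-covariant structure) onto M. -/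
import Mathlib


open TensorProduct

noncomputable def tmul2 {k A B C D E F : Type*} [CommRing k]
    [AddCommGroup A] [AddCommGroup B] [AddCommGroup C] [AddCommGroup D]
    [AddCommGroup E] [AddCommGroup F]
    [Module k A] [Module k B] [Module k C] [Module k D] [Module k E] [Module k F]
    (f : A →ₗ[k] C →ₗ[k] E) (g : B →ₗ[k] D →ₗ[k] F) :
    (A ⊗[k] B) →ₗ[k] (C ⊗[k] D) →ₗ[k] (E ⊗[k] F) :=
  TensorProduct.curry
    ((TensorProduct.map (TensorProduct.lift f) (TensorProduct.lift g)) ∘ₗ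
      (TensorProduct.tensorTensorTensorComm k A B C D).toLinearMap)

/-- A monoidal Hom-Hopf algebra over a commutative ring `k`. -/
structure MonHomHopf (k H : Type*) [CommRing k] [AddCommGroup H] [Module k H] where
  α : H ≃ₗ[k] H
  mul : H →ₗ[k] H →ₗ[k] H
  one : H
  comul : H →ₗ[k] H ⊗[k] H
  counit : H →ₗ[k] k
  S : H →ₗ[k] H
  alpha_mul : ∀ g h, α (mul g h) = mul (α g) (α h)
  alpha_one : α one = one
  hom_assoc : ∀ g h l, mul (α g) (mul h l) = mul (mul g h) (α l)
  mul_one' : ∀ h, mul h one = α h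
  one_mul' : ∀ h, mul one h = α h
  comul_alpha : ∀ h, comul (α h)
    = TensorProduct.map α.toLinearMap α.toLinearMap (comul h)
  counit_alpha : ∀ h, counit (α h) = counit h
  hom_coassoc : ∀ h,
    (TensorProduct.assoc k H H H) ((TensorProduct.map comul α.symm.toLinearMap) (comul h))
      = (TensorProduct.map α.symm.toLinearMap comul) (comul h)
  counit_comul_left : ∀ h,
    (TensorProduct.lid k H) ((TensorProduct.map counit LinearMap.id) (comul h)) = α.symm h
  counit_comul_right : ∀ h,
    (TensorProduct.rid k H) ((TensorProduct.map LinearMap.id counit) (comul h)) = α.symm h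
  comul_mul : ∀ g h, comul (mul g h) = tmul2 mul mul (comul g) (comul h)
  comul_one : comul one = one ⊗ₜ[k] one
  counit_mul : ∀ g h, counit (mul g h) = counit g * counit h
  counit_one : counit one = 1
  antipode_left : ∀ h,
    (TensorProduct.lift mul) ((TensorProduct.map S LinearMap.id) (comul h)) = counit h • one
  antipode_right : ∀ h,
    (TensorProduct.lift mul) ((TensorProduct.map LinearMap.id S) (comul h)) = counit h • one
  S_alpha : ∀ h, S (α h) = α (S h)

/-- A left-covariant `(H,α)`-Hom-bimodule. -/
structure LeftCovBimod {k H : Type*} [CommRing k] [AddCommGroup H] [Module k H]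
    (A : MonHomHopf k H) (M : Type*) [AddCommGroup M] [Module k M] where
  μ : M ≃ₗ[k] M
  lact : H →ₗ[k] M →ₗ[k] M
  ract : M →ₗ[k] H →ₗ[k] M
  lact_assoc : ∀ g h m, lact (A.α g) (lact h m) = lact (A.mul g h) (μ m)
  lact_one : ∀ m, lact A.one m = μ m
  mu_lact : ∀ h m, μ (lact h m) = lact (A.α h) (μ m)
  ract_assoc : ∀ m g h, ract (μ m) (A.mul g h) = ract (ract m g) (A.α h)
  ract_one : ∀ m, ract m A.one = μ m
  mu_ract : ∀ m h, μ (ract m h) = ract (μ m) (A.α h)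
  bimod : ∀ h m g, ract (lact h m) (A.α g) = lact (A.α h) (ract m g)
  rho : M →ₗ[k] H ⊗[k] M
  rho_coassoc : ∀ m,
    (TensorProduct.map (LinearMap.id : H →ₗ[k] H) rho) (rho m)
      = (TensorProduct.assoc k H H M)
          ((TensorProduct.map
              ((TensorProduct.map A.α.toLinearMap (LinearMap.id : H →ₗ[k] H)) ∘ₗ A.comul)
              μ.symm.toLinearMap) (rho m))
  rho_counit : ∀ m,
    (TensorProduct.lid k M) ((TensorProduct.map A.counit (LinearMap.id : M →ₗ[k] M)) (rho m))
      = μ.symm m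
  rho_mu : ∀ m, rho (μ m) = TensorProduct.map A.α.toLinearMap μ.toLinearMap (rho m)
  rho_cov : ∀ h g m,
    rho (ract (lact h m) (A.α g))
      = tmul2 A.mul lact (A.comul (A.α h)) (tmul2 A.mul ract (rho m) (A.comul g))

/-- The projection `P_L(m) = S(m₍₋₁₎) · m₍₀₎`. -/
noncomputable def LeftCovBimod.PL {k H : Type*} [CommRing k] [AddCommGroup H] [Module k H]
    {A : MonHomHopf k H} {M : Type*} [AddCommGroup M] [Module k M]
    (B : LeftCovBimod A M) : M →ₗ[k] M :=
  (TensorProduct.lift (B.lact ∘ₗ A.S)) ∘ₗ B.rho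

/-- The right adjoint Hom-action of `H` on a left-covariant Hom-bimodule:
`x ◁ h = (S(h₁) · μ⁻¹(x)) · α(h₂)`. -/
noncomputable def LeftCovBimod.adRM {k H : Type*} [CommRing k] [AddCommGroup H] [Module k H]
    {A : MonHomHopf k H} {M : Type*} [AddCommGroup M] [Module k M]
    (B : LeftCovBimod A M) (x : M) : H →ₗ[k] M :=
  (TensorProduct.lift
    ((B.ract.comp ((B.lact.flip (B.μ.symm x)).comp A.S)).compl₂ A.α.toLinearMap)) ∘ₗ A.comul

/-- The submodule of left Hom-coinvariants `ᶜᵒᴴM = {m | ρ(m) = 1 ⊗ μ⁻¹(m)}`. -/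
noncomputable def LeftCovBimod.coinv {k H : Type*} [CommRing k] [AddCommGroup H] [Module k H]
    {A : MonHomHopf k H} {M : Type*} [AddCommGroup M] [Module k M]
    (B : LeftCovBimod A M) : Submodule k M where
  carrier := {m | B.rho m = A.one ⊗ₜ[k] (B.μ.symm m)}
  add_mem' := by
    intro a b ha hb
    simp only [Set.mem_setOf_eq] at *
    rw [map_add, ha, hb, map_add, TensorProduct.tmul_add]
  zero_mem' := by
    simp only [Set.mem_setOf_eq, map_zero, TensorProduct.tmul_zero]
  smul_mem' := by
    intro c x hx
    simp only [Set.mem_setOf_eq] at *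
    rw [map_smul, hx, map_smul, TensorProduct.tmul_smul]

/-- The canonical map `θ : H ⊗ ᶜᵒᴴM → M`, `θ(h ⊗ u) = h · u`. -/
noncomputable def LeftCovBimod.theta {k H : Type*} [CommRing k] [AddCommGroup H] [Module k H]
    {A : MonHomHopf k H} {M : Type*} [AddCommGroup M] [Module k M]
    (B : LeftCovBimod A M) : (H ⊗[k] ↥(B.coinv)) →ₗ[k] M :=
  TensorProduct.lift (B.lact.compl₂ (B.coinv).subtype)


namespace MonHomHopf
variable {k H : Type*} [CommRing k] [AddCommGroup H] [Module k H] (A : MonHomHopf k H)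

@[simp] theorem tmul2_tmul' {A' B C D E F : Type*}
    [AddCommGroup A'] [AddCommGroup B] [AddCommGroup C] [AddCommGroup D]
    [AddCommGroup E] [AddCommGroup F]
    [Module k A'] [Module k B] [Module k C] [Module k D] [Module k E] [Module k F]
    (f : A' →ₗ[k] C →ₗ[k] E) (g : B →ₗ[k] D →ₗ[k] F)
    (a : A') (b : B) (c : C) (d : D) :
    tmul2 f g (a ⊗ₜ[k] b) (c ⊗ₜ[k] d) = f a c ⊗ₜ[k] g b d := by
  simp [tmul2]

theorem alpha_symm_one : A.α.symm A.one = A.one := by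
  conv_lhs => rw [← A.alpha_one]
  exact A.α.symm_apply_apply _

theorem alpha_symm_mul (g h : H) :
    A.α.symm (A.mul g h) = A.mul (A.α.symm g) (A.α.symm h) := by
  apply A.α.injective
  rw [A.α.apply_symm_apply, A.alpha_mul, A.α.apply_symm_apply, A.α.apply_symm_apply]

theorem S_alpha_symm (h : H) : A.S (A.α.symm h) = A.α.symm (A.S h) := by
  apply A.α.injective
  rw [← A.S_alpha, A.α.apply_symm_apply, A.α.apply_symm_apply]

theorem counit_alpha_symm (h : H) : A.counit (A.α.symm h) = A.counit h := by
  conv_rhs => rw [← A.α.apply_symm_apply h, A.counit_alpha]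

theorem comul_alpha_symm (h : H) :
    A.comul (A.α.symm h)
      = TensorProduct.map A.α.symm.toLinearMap A.α.symm.toLinearMap (A.comul h) := by
  have := A.comul_alpha (A.α.symm h)
  rw [A.α.apply_symm_apply] at this
  rw [this, ← LinearMap.comp_apply, ← TensorProduct.map_comp,
    show (A.α.symm.toLinearMap ∘ₗ A.α.toLinearMap) = LinearMap.id from by ext x; simp,
    TensorProduct.map_id, LinearMap.id_apply]

theorem S_one : A.S A.one = A.one := by
  have h := A.antipode_left A.one
  rw [A.comul_one] at h
  simp only [TensorProduct.map_tmul, TensorProduct.lift.tmul, LinearMap.id_apply] at h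
  rw [A.mul_one', A.counit_one, one_smul] at h
  have := congrArg A.α.symm h
  rwa [A.α.symm_apply_apply, alpha_symm_one] at this

end MonHomHopf

namespace MonHomHopf
variable {k H : Type*} [CommRing k] [AddCommGroup H] [Module k H] (A : MonHomHopf k H)

/-- Componentwise multiplication on `H ⊗ H`. -/
noncomputable def mm : H ⊗[k] H →ₗ[k] H ⊗[k] H →ₗ[k] H ⊗[k] H := tmul2 A.mul A.mul

@[simp] theorem mm_tmul (a b c d : H) :
    mm A (a ⊗ₜ[k] b) (c ⊗ₜ[k] d) = A.mul a c ⊗ₜ[k] A.mul b d := tmul2_tmul' _ _ _ _ _ _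

noncomputable def Xm : H →ₗ[k] H ⊗[k] H := A.comul ∘ₗ A.S

noncomputable def Ym : H →ₗ[k] H ⊗[k] H :=
  (TensorProduct.comm k H H).toLinearMap ∘ₗ (TensorProduct.map A.S A.S) ∘ₗ A.comul

noncomputable def uu : H →ₗ[k] H ⊗[k] H := A.counit.smulRight (A.one ⊗ₜ[k] A.one)

@[simp] theorem Xm_apply (x : H) : Xm A x = A.comul (A.S x) := rfl
@[simp] theorem uu_apply (x : H) : uu A x = A.counit x • (A.one ⊗ₜ[k] A.one) := rfl
theorem Ym_apply (x : H) :
    Ym A x = (TensorProduct.comm k H H) ((TensorProduct.map A.S A.S) (A.comul x)) := rfl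

noncomputable def conv (f g : H →ₗ[k] H ⊗[k] H) : H →ₗ[k] H ⊗[k] H :=
  TensorProduct.lift (((mm A) ∘ₗ f).compl₂ g) ∘ₗ A.comul

theorem mm_one_right (t : H ⊗[k] H) :
    mm A t (A.one ⊗ₜ[k] A.one) = TensorProduct.map A.α.toLinearMap A.α.toLinearMap t := by
  induction t using TensorProduct.induction_on with
  | zero => simp
  | tmul a b => simp [A.mul_one']
  | add x y hx hy => simp only [map_add, LinearMap.add_apply, hx, hy]

theorem mm_one_left (t : H ⊗[k] H) :
    mm A (A.one ⊗ₜ[k] A.one) t = TensorProduct.map A.α.toLinearMap A.α.toLinearMap t := by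
  induction t using TensorProduct.induction_on with
  | zero => simp
  | tmul a b => simp [A.one_mul']
  | add x y hx hy => simp only [map_add, LinearMap.add_apply, hx, hy]

theorem mm_assoc (t s r : H ⊗[k] H) :
    mm A (TensorProduct.map A.α.toLinearMap A.α.toLinearMap t) (mm A s r)
      = mm A (mm A t s) (TensorProduct.map A.α.toLinearMap A.α.toLinearMap r) := by
  induction t using TensorProduct.induction_on with
  | zero => simp
  | add x y hx hy => simp only [map_add, LinearMap.add_apply, hx, hy]
  | tmul a b =>
    induction s using TensorProduct.induction_on with
    | zero => simp
    | add x y hx hy => simp only [map_add, LinearMap.add_apply, hx, hy]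
    | tmul c d =>
      induction r using TensorProduct.induction_on with
      | zero => simp
      | add x y hx hy => simp only [map_add, LinearMap.add_apply, hx, hy]
      | tmul e f => simp [A.hom_assoc]

theorem comul_alpha_comp :
    A.comul ∘ₗ A.α.toLinearMap
      = TensorProduct.map A.α.toLinearMap A.α.toLinearMap ∘ₗ A.comul := by
  ext x; exact A.comul_alpha x

theorem Xm_alpha (x : H) :
    Xm A (A.α x) = TensorProduct.map A.α.toLinearMap A.α.toLinearMap (Xm A x) := by
  simp [Xm, A.S_alpha, A.comul_alpha]

theorem comm_map {P Q R S' : Type*} [AddCommGroup P] [AddCommGroup Q] [AddCommGroup R]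
    [AddCommGroup S'] [Module k P] [Module k Q] [Module k R] [Module k S']
    (f : P →ₗ[k] R) (g : Q →ₗ[k] S') (t : P ⊗[k] Q) :
    (TensorProduct.comm k R S') ((TensorProduct.map f g) t)
      = (TensorProduct.map g f) ((TensorProduct.comm k P Q) t) := by
  induction t using TensorProduct.induction_on with
  | zero => simp
  | tmul a b => simp
  | add x y hx hy => simp only [map_add, hx, hy]

theorem Ym_alpha (x : H) :
    Ym A (A.α x) = TensorProduct.map A.α.toLinearMap A.α.toLinearMap (Ym A x) := by
  have hSS : (TensorProduct.map A.S A.S)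
      ((TensorProduct.map A.α.toLinearMap A.α.toLinearMap) (A.comul x))
      = (TensorProduct.map A.α.toLinearMap A.α.toLinearMap)
          ((TensorProduct.map A.S A.S) (A.comul x)) := by
    induction A.comul x using TensorProduct.induction_on with
    | zero => simp
    | tmul a b => simp [A.S_alpha]
    | add x y hx hy => simp only [map_add, hx, hy]
  simp only [Ym_apply, A.comul_alpha, hSS, comm_map]

end MonHomHopf

section ExtHelpers
variable {k : Type*} [CommRing k]
variable {P Q R S' Z : Type*} [AddCommGroup P] [AddCommGroup Q] [AddCommGroup R]
  [AddCommGroup S'] [AddCommGroup Z] [Module k P] [Module k Q] [Module k R]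
  [Module k S'] [Module k Z]

/-- ext for maps out of `P ⊗ (Q ⊗ R)`. -/
theorem ext_n3 {f g : P ⊗[k] (Q ⊗[k] R) →ₗ[k] Z}
    (h : ∀ p q r, f (p ⊗ₜ[k] (q ⊗ₜ[k] r)) = g (p ⊗ₜ[k] (q ⊗ₜ[k] r))) : f = g := by
  have hs : Function.Surjective ⇑((TensorProduct.assoc k P Q R).toLinearMap) :=
    fun x => ⟨(TensorProduct.assoc k P Q R).symm x, by simp⟩
  refine (LinearMap.cancel_right hs).mp ?_
  apply TensorProduct.ext_threefold
  intro p q r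
  simpa using h p q r

/-- ext for maps out of `(P ⊗ Q) ⊗ (R ⊗ S')`. -/
theorem ext_m22 {f g : (P ⊗[k] Q) ⊗[k] (R ⊗[k] S') →ₗ[k] Z}
    (h : ∀ p q r s, f ((p ⊗ₜ[k] q) ⊗ₜ[k] (r ⊗ₜ[k] s)) = g ((p ⊗ₜ[k] q) ⊗ₜ[k] (r ⊗ₜ[k] s))) :
    f = g := by
  have hs : Function.Surjective ⇑((TensorProduct.assoc k (P ⊗[k] Q) R S').toLinearMap) :=
    fun x => ⟨(TensorProduct.assoc k (P ⊗[k] Q) R S').symm x, by simp⟩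
  refine (LinearMap.cancel_right hs).mp ?_
  apply TensorProduct.ext_fourfold
  intro p q r s
  simpa using h p q r s

/-- ext for maps out of `P ⊗ (Q ⊗ (R ⊗ S'))`. -/
theorem ext_n4 {f g : P ⊗[k] (Q ⊗[k] (R ⊗[k] S')) →ₗ[k] Z}
    (h : ∀ p q r s, f (p ⊗ₜ[k] (q ⊗ₜ[k] (r ⊗ₜ[k] s))) = g (p ⊗ₜ[k] (q ⊗ₜ[k] (r ⊗ₜ[k] s)))) :
    f = g := by
  have hs : Function.Surjective ⇑((TensorProduct.assoc k P Q (R ⊗[k] S')).toLinearMap) :=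
    fun x => ⟨(TensorProduct.assoc k P Q (R ⊗[k] S')).symm x, by simp⟩
  refine (LinearMap.cancel_right hs).mp ?_
  apply ext_m22
  intro p q r s
  simpa using h p q r s

end ExtHelpers

namespace MonHomHopf
variable {k H : Type*} [CommRing k] [AddCommGroup H] [Module k H] (A : MonHomHopf k H)

noncomputable def kap : H ⊗[k] H →ₗ[k] H := TensorProduct.lift (A.mul.compl₂ A.S)

@[simp] theorem kap_tmul (u v : H) : kap A (u ⊗ₜ[k] v) = A.mul u (A.S v) := rfl

theorem kap_comul (x : H) : kap A (A.comul x) = A.counit x • A.one := by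
  have : kap A = TensorProduct.lift A.mul ∘ₗ TensorProduct.map LinearMap.id A.S := by
    apply TensorProduct.ext'; intro a b; simp
  rw [this, LinearMap.comp_apply, A.antipode_right]

theorem kap_comul_comp : (kap A) ∘ₗ A.comul = A.counit.smulRight A.one :=
  LinearMap.ext fun x => by simpa using kap_comul A x

noncomputable def kapL : H ⊗[k] H →ₗ[k] H := TensorProduct.lift (A.mul ∘ₗ A.S)

@[simp] theorem kapL_tmul (u v : H) : kapL A (u ⊗ₜ[k] v) = A.mul (A.S u) v := rfl

theorem kapL_comul (x : H) : kapL A (A.comul x) = A.counit x • A.one := by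
  have : kapL A = TensorProduct.lift A.mul ∘ₗ TensorProduct.map A.S LinearMap.id := by
    apply TensorProduct.ext'; intro a b; simp
  rw [this, LinearMap.comp_apply, A.antipode_left]

/-- `a ⊗ (b ⊗ (c ⊗ d)) ↦ a S(d) ⊗ b S(c)`. -/
noncomputable def Psi1 : H ⊗[k] (H ⊗[k] (H ⊗[k] H)) →ₗ[k] H ⊗[k] H :=
  (TensorProduct.map (kap A) (kap A)) ∘ₗ
    (TensorProduct.tensorTensorTensorComm k H H H H).toLinearMap ∘ₗ
    (TensorProduct.map LinearMap.id (TensorProduct.comm k H H).toLinearMap) ∘ₗ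
    (TensorProduct.assoc k H H (H ⊗[k] H)).symm.toLinearMap

@[simp] theorem Psi1_tmul (a b c d : H) :
    Psi1 A (a ⊗ₜ[k] (b ⊗ₜ[k] (c ⊗ₜ[k] d)))
      = A.mul a (A.S d) ⊗ₜ[k] A.mul b (A.S c) := by
  simp [Psi1]

noncomputable def Psi2 : (H ⊗[k] H) ⊗[k] (H ⊗[k] H) →ₗ[k] H ⊗[k] H :=
  Psi1 A ∘ₗ (TensorProduct.assoc k H H (H ⊗[k] H)).toLinearMap

@[simp] theorem Psi2_tmul (a b c d : H) :
    Psi2 A ((a ⊗ₜ[k] b) ⊗ₜ[k] (c ⊗ₜ[k] d))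
      = A.mul a (A.S d) ⊗ₜ[k] A.mul b (A.S c) := by
  simp [Psi2]

theorem mm_SS (t s : H ⊗[k] H) :
    mm A t ((TensorProduct.comm k H H) ((TensorProduct.map A.S A.S) s))
      = Psi2 A (t ⊗ₜ[k] s) := by
  induction t using TensorProduct.induction_on with
  | zero => simp
  | add x y hx hy => simp only [TensorProduct.add_tmul, map_add, LinearMap.add_apply, hx, hy]
  | tmul a b =>
    induction s using TensorProduct.induction_on with
    | zero => simp
    | add x y hx hy => simp only [TensorProduct.tmul_add, map_add, hx, hy]
    | tmul c d => simp

theorem convA (h : H) :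
    conv A (Xm A) A.comul h = A.counit h • (A.one ⊗ₜ[k] A.one) := by
  have e1 : TensorProduct.lift (((mm A) ∘ₗ Xm A).compl₂ A.comul)
      = A.comul ∘ₗ TensorProduct.lift A.mul ∘ₗ TensorProduct.map A.S LinearMap.id := by
    apply TensorProduct.ext'; intro a b
    simp only [TensorProduct.lift.tmul, LinearMap.compl₂_apply, LinearMap.comp_apply,
      TensorProduct.map_tmul, LinearMap.id_apply, Xm_apply]
    rw [A.comul_mul]; rfl
  unfold conv
  rw [LinearMap.comp_apply, e1]
  simp only [LinearMap.comp_apply]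
  rw [A.antipode_left, map_smul, A.comul_one]

theorem convB (h : H) :
    conv A A.comul (Ym A) h = A.counit h • (A.one ⊗ₜ[k] A.one) := by
  classical
  have e1 : TensorProduct.lift (((mm A) ∘ₗ A.comul).compl₂ (Ym A))
      = Psi2 A ∘ₗ TensorProduct.map A.comul A.comul := by
    apply TensorProduct.ext'; intro g c
    simp only [TensorProduct.lift.tmul, LinearMap.compl₂_apply, LinearMap.comp_apply,
      TensorProduct.map_tmul, Ym_apply]
    exact mm_SS A (A.comul g) (A.comul c)
  set W' : H ⊗[k] H →ₗ[k] H ⊗[k] (H ⊗[k] H) :=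
    TensorProduct.map LinearMap.id (A.comul ∘ₗ A.α.toLinearMap) with hW'
  have e2 : (TensorProduct.assoc k H H (H ⊗[k] H)).toLinearMap ∘ₗ
        TensorProduct.map A.comul A.comul
      = (TensorProduct.map LinearMap.id W') ∘ₗ
          (TensorProduct.assoc k H H H).toLinearMap ∘ₗ
          TensorProduct.map A.comul A.α.symm.toLinearMap := by
    apply TensorProduct.ext'; intro g c
    simp only [LinearMap.comp_apply, TensorProduct.map_tmul, LinearEquiv.coe_coe]
    induction A.comul g using TensorProduct.induction_on with
    | zero => simp
    | tmul a b => simp [hW', A.α.apply_symm_apply]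
    | add x y hx hy => simp only [TensorProduct.add_tmul, map_add, hx, hy]
  have key : conv A A.comul (Ym A) h
      = Psi1 A ((TensorProduct.map LinearMap.id W')
          ((TensorProduct.map A.α.symm.toLinearMap A.comul) (A.comul h))) := by
    unfold conv
    rw [LinearMap.comp_apply, e1, LinearMap.comp_apply, Psi2, LinearMap.comp_apply,
      ← LinearMap.comp_apply (TensorProduct.assoc k H H (H ⊗[k] H)).toLinearMap, e2]
    simp only [LinearMap.comp_apply, LinearEquiv.coe_coe]
    rw [A.hom_coassoc]
  have Nform : ∀ c : H, W' (A.comul c)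
      = (TensorProduct.map A.α.toLinearMap
          (TensorProduct.map A.α.toLinearMap A.α.toLinearMap))
          ((TensorProduct.assoc k H H H)
            ((TensorProduct.map A.comul A.α.symm.toLinearMap) (A.comul c))) := by
    intro c
    rw [A.hom_coassoc]
    induction A.comul c using TensorProduct.induction_on with
    | zero => simp
    | tmul a b => simp [hW', A.comul_alpha, A.α.apply_symm_apply]
    | add x y hx hy => simp only [map_add, hx, hy]
  have L2 : ∀ (a c : H), Psi1 A (a ⊗ₜ[k] (W' (A.comul c)))
      = A.mul a (A.S (A.α.symm c)) ⊗ₜ[k] A.one := by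
    intro a c
    set Ga : (H ⊗[k] H) ⊗[k] H →ₗ[k] H ⊗[k] H :=
      (Psi1 A ∘ₗ (TensorProduct.mk k H (H ⊗[k] (H ⊗[k] H)) a)) ∘ₗ
        (TensorProduct.map A.α.toLinearMap
          (TensorProduct.map A.α.toLinearMap A.α.toLinearMap)) ∘ₗ
        (TensorProduct.assoc k H H H).toLinearMap with hGa
    have step1 : Psi1 A (a ⊗ₜ[k] (W' (A.comul c)))
        = Ga ((TensorProduct.map A.comul A.α.symm.toLinearMap) (A.comul c)) := by
      rw [Nform c]; simp [hGa]
    set Ja : H ⊗[k] H →ₗ[k] H ⊗[k] H :=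
      (TensorProduct.comm k H H).toLinearMap ∘ₗ
        (TensorProduct.map A.α.toLinearMap (A.mul a ∘ₗ A.α.toLinearMap ∘ₗ A.S)) with hJa
    have L2a : Ga = Ja ∘ₗ (TensorProduct.map (kap A) LinearMap.id) := by
      apply TensorProduct.ext_threefold; intro u v w
      simp only [hGa, hJa, LinearMap.comp_apply, LinearEquiv.coe_coe,
        TensorProduct.assoc_tmul, TensorProduct.map_tmul, TensorProduct.mk_apply,
        Psi1_tmul, LinearMap.id_apply, TensorProduct.comm_tmul, kap_tmul]
      rw [A.S_alpha, A.S_alpha, ← A.alpha_mul]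
    have comb : (TensorProduct.map (kap A) LinearMap.id)
          ((TensorProduct.map A.comul A.α.symm.toLinearMap) (A.comul c))
        = (TensorProduct.map (A.counit.smulRight A.one) A.α.symm.toLinearMap)
            (A.comul c) := by
      rw [← LinearMap.comp_apply, ← TensorProduct.map_comp, kap_comul_comp]
      simp
    have L2b : Ja ∘ₗ (TensorProduct.map (A.counit.smulRight A.one) A.α.symm.toLinearMap)
        = ((TensorProduct.mk k H H).flip A.one) ∘ₗ (A.mul a) ∘ₗ A.S ∘ₗ
            (TensorProduct.lid k H).toLinearMap ∘ₗ
            (TensorProduct.map A.counit LinearMap.id) := by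
      apply TensorProduct.ext'; intro c1 c2
      simp only [hJa, LinearMap.comp_apply, TensorProduct.map_tmul, LinearEquiv.coe_coe,
        LinearMap.smulRight_apply, LinearMap.id_apply, TensorProduct.smul_tmul',
        map_smul, TensorProduct.comm_tmul, TensorProduct.lid_tmul,
        TensorProduct.mk_apply, LinearMap.flip_apply]
      rw [A.alpha_one, A.S_alpha_symm, A.α.apply_symm_apply]
      simp [TensorProduct.smul_tmul]
    rw [step1, L2a, LinearMap.comp_apply, comb, ← LinearMap.comp_apply, L2b]
    simp only [LinearMap.comp_apply, LinearEquiv.coe_coe]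
    rw [A.counit_comul_left]
    simp
  have B4 : Psi1 A ((TensorProduct.map A.α.symm.toLinearMap (W' ∘ₗ A.comul)) (A.comul h))
      = A.counit h • (A.one ⊗ₜ[k] A.one) := by
    have e5 : Psi1 A ∘ₗ (TensorProduct.map A.α.symm.toLinearMap (W' ∘ₗ A.comul))
        = ((TensorProduct.mk k H H).flip A.one) ∘ₗ A.α.symm.toLinearMap ∘ₗ
            (TensorProduct.lift A.mul) ∘ₗ (TensorProduct.map LinearMap.id A.S) := by
      apply TensorProduct.ext'; intro g c
      simp only [LinearMap.comp_apply, TensorProduct.map_tmul, LinearEquiv.coe_coe,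
        LinearMap.id_apply]
      rw [L2 (A.α.symm g) c]
      simp only [TensorProduct.lift.tmul, TensorProduct.mk_apply, LinearMap.flip_apply]
      rw [alpha_symm_mul, A.S_alpha_symm]
    rw [← LinearMap.comp_apply, e5]
    simp only [LinearMap.comp_apply, LinearEquiv.coe_coe]
    rw [A.antipode_right]
    simp [alpha_symm_one, TensorProduct.smul_tmul']
  rw [key, ← B4]
  congr 1
  rw [← LinearMap.comp_apply (TensorProduct.map LinearMap.id W'), ← TensorProduct.map_comp]
  simp

end MonHomHopf

namespace MonHomHopf
variable {k H : Type*} [CommRing k] [AddCommGroup H] [Module k H] (A : MonHomHopf k H)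

theorem conv_X_uu (x : H) : conv A (Xm A) (uu A) x = Xm A x := by
  have e : TensorProduct.lift (((mm A) ∘ₗ Xm A).compl₂ (uu A))
      = (TensorProduct.map A.α.toLinearMap A.α.toLinearMap) ∘ₗ (Xm A) ∘ₗ
          (TensorProduct.rid k H).toLinearMap ∘ₗ
          (TensorProduct.map LinearMap.id A.counit) := by
    apply TensorProduct.ext'; intro a b
    simp only [TensorProduct.lift.tmul, LinearMap.compl₂_apply, LinearMap.comp_apply,
      uu_apply, map_smul, TensorProduct.map_tmul, LinearEquiv.coe_coe,
      TensorProduct.rid_tmul, LinearMap.id_apply]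
    rw [mm_one_right]
  unfold conv
  rw [LinearMap.comp_apply, e]
  simp only [LinearMap.comp_apply, LinearEquiv.coe_coe]
  rw [A.counit_comul_right, ← Xm_alpha, A.α.apply_symm_apply]

theorem conv_uu_Y (x : H) : conv A (uu A) (Ym A) x = Ym A x := by
  have e : TensorProduct.lift (((mm A) ∘ₗ uu A).compl₂ (Ym A))
      = (TensorProduct.map A.α.toLinearMap A.α.toLinearMap) ∘ₗ (Ym A) ∘ₗ
          (TensorProduct.lid k H).toLinearMap ∘ₗ
          (TensorProduct.map A.counit LinearMap.id) := by
    apply TensorProduct.ext'; intro a b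
    simp only [TensorProduct.lift.tmul, LinearMap.compl₂_apply, LinearMap.comp_apply,
      uu_apply, map_smul, LinearMap.smul_apply, TensorProduct.map_tmul,
      LinearEquiv.coe_coe, TensorProduct.lid_tmul, LinearMap.id_apply]
    rw [mm_one_left]
  unfold conv
  rw [LinearMap.comp_apply, e]
  simp only [LinearMap.comp_apply, LinearEquiv.coe_coe]
  rw [A.counit_comul_left, ← Ym_alpha, A.α.apply_symm_apply]

theorem conv_assoc_XDY (x : H) :
    conv A (Xm A) (conv A A.comul (Ym A)) x
      = conv A (conv A (Xm A) A.comul) (Ym A) x := by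
  set CDY := TensorProduct.lift (((mm A) ∘ₗ A.comul).compl₂ (Ym A)) with hCDY
  set CXD := TensorProduct.lift (((mm A) ∘ₗ Xm A).compl₂ A.comul) with hCXD
  set L1 : H ⊗[k] (H ⊗[k] H) →ₗ[k] H ⊗[k] H :=
    TensorProduct.lift (((mm A) ∘ₗ Xm A).compl₂ CDY) with hL1
  set L2 : (H ⊗[k] H) ⊗[k] H →ₗ[k] H ⊗[k] H :=
    TensorProduct.lift (((mm A) ∘ₗ CXD).compl₂ (Ym A)) with hL2
  have e3 : TensorProduct.lift (((mm A) ∘ₗ Xm A).compl₂ (CDY ∘ₗ A.comul))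
      = L1 ∘ₗ (TensorProduct.map LinearMap.id A.comul) := by
    apply TensorProduct.ext'; intro a b
    simp [hL1]
  have e4 : TensorProduct.lift (((mm A) ∘ₗ (CXD ∘ₗ A.comul)).compl₂ (Ym A))
      = L2 ∘ₗ (TensorProduct.map A.comul LinearMap.id) := by
    apply TensorProduct.ext'; intro a b
    simp [hL2]
  have E3 : L1 ∘ₗ (TensorProduct.map A.α.toLinearMap LinearMap.id) ∘ₗ
        (TensorProduct.assoc k H H H).toLinearMap
      = L2 ∘ₗ (TensorProduct.map LinearMap.id A.α.toLinearMap) := by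
    apply TensorProduct.ext_threefold; intro u v w
    simp only [hL1, hL2, hCDY, hCXD, LinearMap.comp_apply, LinearEquiv.coe_coe,
      TensorProduct.assoc_tmul, TensorProduct.map_tmul, LinearMap.id_apply,
      TensorProduct.lift.tmul, LinearMap.compl₂_apply]
    rw [Xm_alpha, Ym_alpha, mm_assoc]
  have lhs1 : conv A (Xm A) (conv A A.comul (Ym A)) x
      = L1 ((TensorProduct.map LinearMap.id A.comul) (A.comul x)) := by
    show (TensorProduct.lift (((mm A) ∘ₗ Xm A).compl₂ (CDY ∘ₗ A.comul))) (A.comul x) = _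
    rw [e3, LinearMap.comp_apply]
  have rhs1 : conv A (conv A (Xm A) A.comul) (Ym A) x
      = L2 ((TensorProduct.map A.comul LinearMap.id) (A.comul x)) := by
    show (TensorProduct.lift (((mm A) ∘ₗ (CXD ∘ₗ A.comul)).compl₂ (Ym A))) (A.comul x) = _
    rw [e4, LinearMap.comp_apply]
  have cc : (TensorProduct.map A.α.toLinearMap LinearMap.id) ∘ₗ
        (TensorProduct.map A.α.symm.toLinearMap A.comul)
      = TensorProduct.map LinearMap.id A.comul := by
    rw [← TensorProduct.map_comp]
    congr 1
    ext y; simp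
  have cc2 : (TensorProduct.map LinearMap.id A.α.toLinearMap) ∘ₗ
        (TensorProduct.map A.comul A.α.symm.toLinearMap)
      = TensorProduct.map A.comul LinearMap.id := by
    rw [← TensorProduct.map_comp]
    congr 1
    ext y; simp
  have mid : (TensorProduct.map LinearMap.id A.comul) (A.comul x)
      = (TensorProduct.map A.α.toLinearMap LinearMap.id)
          ((TensorProduct.assoc k H H H)
            ((TensorProduct.map A.comul A.α.symm.toLinearMap) (A.comul x))) := by
    rw [A.hom_coassoc, ← cc, LinearMap.comp_apply]
  have mid2 : (TensorProduct.map A.comul LinearMap.id) (A.comul x)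
      = (TensorProduct.map LinearMap.id A.α.toLinearMap)
          ((TensorProduct.map A.comul A.α.symm.toLinearMap) (A.comul x)) := by
    rw [← cc2, LinearMap.comp_apply]
  rw [lhs1, rhs1, mid, mid2]
  have := LinearMap.congr_fun E3
    ((TensorProduct.map A.comul A.α.symm.toLinearMap) (A.comul x))
  simpa only [LinearMap.comp_apply, LinearEquiv.coe_coe] using this

theorem comul_S (h : H) :
    A.comul (A.S h)
      = (TensorProduct.comm k H H) ((TensorProduct.map A.S A.S) (A.comul h)) := by
  have hA : conv A (Xm A) A.comul = uu A := LinearMap.ext fun x => by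
    simpa using convA A x
  have hB : conv A A.comul (Ym A) = uu A := LinearMap.ext fun x => by
    simpa using convB A x
  have : Xm A h = Ym A h := by
    calc Xm A h = conv A (Xm A) (uu A) h := (conv_X_uu A h).symm
    _ = conv A (Xm A) (conv A A.comul (Ym A)) h := by rw [hB]
    _ = conv A (conv A (Xm A) A.comul) (Ym A) h := conv_assoc_XDY A h
    _ = conv A (uu A) (Ym A) h := by rw [hA]
    _ = Ym A h := conv_uu_Y A h
  simpa [Ym_apply] using this

end MonHomHopf

namespace LeftCovBimod
open MonHomHopf
variable {k H : Type*} [CommRing k] [AddCommGroup H] [Module k H]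
  {A : MonHomHopf k H} {M : Type*} [AddCommGroup M] [Module k M] (B : LeftCovBimod A M)

theorem mu_lact_symm (h : H) (m : M) :
    B.μ.symm (B.lact h m) = B.lact (A.α.symm h) (B.μ.symm m) := by
  apply B.μ.injective
  rw [B.μ.apply_symm_apply, B.mu_lact, A.α.apply_symm_apply, B.μ.apply_symm_apply]

theorem mu_ract_symm (m : M) (h : H) :
    B.μ.symm (B.ract m h) = B.ract (B.μ.symm m) (A.α.symm h) := by
  apply B.μ.injective
  rw [B.μ.apply_symm_apply, B.mu_ract, A.α.apply_symm_apply, B.μ.apply_symm_apply]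

theorem mapαμ_eq : TensorProduct.map A.α.toLinearMap B.μ.toLinearMap
    = (TensorProduct.congr A.α B.μ).toLinearMap := by
  apply TensorProduct.ext'; intro a b
  simp [TensorProduct.congr_tmul]

theorem mapαμ_inj :
    Function.Injective ⇑(TensorProduct.map A.α.toLinearMap B.μ.toLinearMap) := by
  rw [mapαμ_eq]
  exact (TensorProduct.congr A.α B.μ).injective

theorem mmr_one (t : H ⊗[k] M) :
    tmul2 A.mul B.ract t (A.one ⊗ₜ[k] A.one)
      = TensorProduct.map A.α.toLinearMap B.μ.toLinearMap t := by
  induction t using TensorProduct.induction_on with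
  | zero => simp
  | tmul a x => simp [A.mul_one', B.ract_one]
  | add x y hx hy => simp only [map_add, LinearMap.add_apply, hx, hy]

theorem mml_alpha (s : H ⊗[k] H) (t : H ⊗[k] M) :
    tmul2 A.mul B.lact (TensorProduct.map A.α.toLinearMap A.α.toLinearMap s)
        (TensorProduct.map A.α.toLinearMap B.μ.toLinearMap t)
      = TensorProduct.map A.α.toLinearMap B.μ.toLinearMap (tmul2 A.mul B.lact s t) := by
  induction s using TensorProduct.induction_on with
  | zero => simp
  | add x y hx hy => simp only [map_add, LinearMap.add_apply, hx, hy]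
  | tmul a b =>
    induction t using TensorProduct.induction_on with
    | zero => simp
    | add x y hx hy => simp only [map_add, LinearMap.add_apply, hx, hy]
    | tmul c x => simp [A.alpha_mul, B.mu_lact]

theorem rho_lact (h : H) (m : M) :
    B.rho (B.lact h m) = tmul2 A.mul B.lact (A.comul h) (B.rho m) := by
  apply mapαμ_inj B
  have lhs : (TensorProduct.map A.α.toLinearMap B.μ.toLinearMap) (B.rho (B.lact h m))
      = B.rho (B.μ (B.lact h m)) := (B.rho_mu _).symm
  rw [lhs, ← B.ract_one (B.lact h m), ← A.alpha_one, B.rho_cov, A.comul_one,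
    mmr_one, A.comul_alpha, mml_alpha]

theorem coinv_def {u : M} (hu : u ∈ B.coinv) :
    B.rho u = A.one ⊗ₜ[k] (B.μ.symm u) := hu

theorem coinv_mu {u : M} (hu : u ∈ B.coinv) : B.μ u ∈ B.coinv := by
  show B.rho (B.μ u) = A.one ⊗ₜ[k] (B.μ.symm (B.μ u))
  rw [B.rho_mu, coinv_def B hu]
  simp [A.alpha_one, B.μ.symm_apply_apply]

theorem coinv_mu_symm {u : M} (hu : u ∈ B.coinv) : B.μ.symm u ∈ B.coinv := by
  show B.rho (B.μ.symm u) = A.one ⊗ₜ[k] (B.μ.symm (B.μ.symm u))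
  apply mapαμ_inj B
  have : (TensorProduct.map A.α.toLinearMap B.μ.toLinearMap) (B.rho (B.μ.symm u))
      = B.rho u := by
    rw [← B.rho_mu, B.μ.apply_symm_apply]
  rw [this, coinv_def B hu]
  simp [A.alpha_one, B.μ.apply_symm_apply]

theorem tmul2_one_left (s : H ⊗[k] H) (v : M) :
    tmul2 A.mul B.lact s (A.one ⊗ₜ[k] v)
      = (TensorProduct.map A.α.toLinearMap (B.lact.flip v)) s := by
  induction s using TensorProduct.induction_on with
  | zero => simp
  | tmul a b => simp [A.mul_one']
  | add x y hx hy => simp only [map_add, LinearMap.add_apply, hx, hy]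

theorem rho_lact_coinv (h : H) {u : M} (hu : u ∈ B.coinv) :
    B.rho (B.lact h u)
      = (TensorProduct.map A.α.toLinearMap (B.lact.flip (B.μ.symm u))) (A.comul h) := by
  rw [rho_lact, coinv_def B hu, tmul2_one_left]

theorem PL_lact_coinv (a : H) {u : M} (hu : u ∈ B.coinv) :
    B.PL (B.lact a u) = A.counit a • B.μ u := by
  unfold PL
  rw [LinearMap.comp_apply, rho_lact_coinv B a hu]
  have e : TensorProduct.lift (B.lact ∘ₗ A.S) ∘ₗ
        (TensorProduct.map A.α.toLinearMap (B.lact.flip (B.μ.symm u)))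
      = (B.lact.flip u) ∘ₗ TensorProduct.lift A.mul ∘ₗ
          (TensorProduct.map A.S LinearMap.id) := by
    apply TensorProduct.ext'; intro x y
    simp only [LinearMap.comp_apply, TensorProduct.map_tmul, TensorProduct.lift.tmul,
      LinearEquiv.coe_coe, LinearMap.flip_apply, LinearMap.id_apply]
    rw [A.S_alpha, B.lact_assoc, B.μ.apply_symm_apply]
  rw [← LinearMap.comp_apply, e]
  simp only [LinearMap.comp_apply]
  rw [A.antipode_left]
  simp [B.lact_one]

end LeftCovBimod

namespace LeftCovBimod
open MonHomHopf
variable {k H : Type*} [CommRing k] [AddCommGroup H] [Module k H]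
  {A : MonHomHopf k H} {M : Type*} [AddCommGroup M] [Module k M] (B : LeftCovBimod A M)

/-- `a ⊗ (b ⊗ y) ↦ Δ(S a) · (b ⊗ y)` (multiplication on first legs, action on second). -/
noncomputable def Kmap : H ⊗[k] (H ⊗[k] M) →ₗ[k] H ⊗[k] M :=
  TensorProduct.lift ((tmul2 A.mul B.lact) ∘ₗ A.comul ∘ₗ A.S)

/-- `a ⊗ b ↦ Δ(S a) · (b ⊗ y)`. -/
noncomputable def Gm (y : M) : H ⊗[k] H →ₗ[k] H ⊗[k] M :=
  TensorProduct.lift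
    (((tmul2 A.mul B.lact) ∘ₗ A.comul ∘ₗ A.S).compl₂ ((TensorProduct.mk k H M).flip y))

theorem Kmap_assoc (s : H ⊗[k] H) (y : M) :
    Kmap B ((TensorProduct.assoc k H H M) (s ⊗ₜ[k] y)) = Gm B y s := by
  induction s using TensorProduct.induction_on with
  | zero => simp
  | tmul a b => simp [Kmap, Gm]
  | add x y' hx hy => simp only [TensorProduct.add_tmul, map_add, hx, hy]

/-- `(p ⊗ q) ⊗ b ↦ (α(S q) b) ⊗ (α(S p) · y)`. -/
noncomputable def Om (y : M) : (H ⊗[k] H) ⊗[k] H →ₗ[k] H ⊗[k] M :=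
  (TensorProduct.map
      (TensorProduct.lift (A.mul ∘ₗ (A.α.toLinearMap ∘ₗ A.S)))
      ((B.lact.flip y) ∘ₗ A.α.toLinearMap ∘ₗ A.S)) ∘ₗ
    (TensorProduct.comm k H (H ⊗[k] H)).toLinearMap ∘ₗ
    (TensorProduct.assoc k H H H).toLinearMap

@[simp] theorem Om_tmul (y : M) (p q b : H) :
    Om B y ((p ⊗ₜ[k] q) ⊗ₜ[k] b)
      = A.mul (A.α (A.S q)) b ⊗ₜ[k] B.lact (A.α (A.S p)) y := by
  simp [Om]

theorem core (h : H) (y : M) :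
    Gm B y ((TensorProduct.map A.α.toLinearMap LinearMap.id) (A.comul h))
      = A.one ⊗ₜ[k] B.lact (A.S (A.α.symm h)) y := by
  -- step a: rewrite Gm ∘ (α ⊗ id) via comul_S
  have stepa : Gm B y ∘ₗ (TensorProduct.map A.α.toLinearMap LinearMap.id)
      = Om B y ∘ₗ (TensorProduct.map A.comul LinearMap.id) := by
    apply TensorProduct.ext'; intro a b
    simp only [LinearMap.comp_apply, TensorProduct.map_tmul, LinearMap.id_apply, Gm,
      TensorProduct.lift.tmul, LinearMap.compl₂_apply, TensorProduct.mk_apply,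
      LinearMap.flip_apply, LinearEquiv.coe_coe]
    rw [A.S_alpha, A.comul_alpha, A.comul_S]
    induction A.comul a using TensorProduct.induction_on with
    | zero => simp
    | tmul p q => simp
    | add x y' hx hy => simp only [TensorProduct.add_tmul, map_add, LinearMap.add_apply,
        hx, hy]
  rw [← LinearMap.comp_apply, stepa, LinearMap.comp_apply]
  -- step c: use Hom-coassociativity
  have cch : (TensorProduct.map LinearMap.id A.α.toLinearMap) ∘ₗ
        (TensorProduct.map A.comul A.α.symm.toLinearMap)
      = TensorProduct.map A.comul LinearMap.id := by
    rw [← TensorProduct.map_comp]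
    congr 1
    ext z; simp
  have cc2 : (TensorProduct.map A.comul LinearMap.id) (A.comul h)
      = (TensorProduct.map LinearMap.id A.α.toLinearMap)
          ((TensorProduct.map A.comul A.α.symm.toLinearMap) (A.comul h)) := by
    rw [← cch, LinearMap.comp_apply]
  have coassoc' : (TensorProduct.map A.comul A.α.symm.toLinearMap) (A.comul h)
      = (TensorProduct.assoc k H H H).symm
          ((TensorProduct.map A.α.symm.toLinearMap A.comul) (A.comul h)) := by
    rw [← A.hom_coassoc, LinearEquiv.symm_apply_apply]
  rw [cc2, coassoc']
  -- step d: the composite map on H ⊗ (H ⊗ H)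
  set V : H ⊗[k] (H ⊗[k] H) →ₗ[k] H ⊗[k] M :=
    Om B y ∘ₗ (TensorProduct.map LinearMap.id A.α.toLinearMap) ∘ₗ
      (TensorProduct.assoc k H H H).symm.toLinearMap with hV
  have hVapp : Om B y ((TensorProduct.map LinearMap.id A.α.toLinearMap)
        ((TensorProduct.assoc k H H H).symm
          ((TensorProduct.map A.α.symm.toLinearMap A.comul) (A.comul h))))
      = V ((TensorProduct.map A.α.symm.toLinearMap A.comul) (A.comul h)) := by
    simp [hV]
  rw [hVapp]
  have hV2 : V = (TensorProduct.map (A.α.toLinearMap ∘ₗ kapL A)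
        ((B.lact.flip y) ∘ₗ A.α.toLinearMap ∘ₗ A.S)) ∘ₗ
      (TensorProduct.comm k H (H ⊗[k] H)).toLinearMap := by
    apply ext_n3; intro x c d
    simp only [hV, LinearMap.comp_apply, LinearEquiv.coe_coe,
      TensorProduct.assoc_symm_tmul, TensorProduct.map_tmul, LinearMap.id_apply,
      Om_tmul, TensorProduct.comm_tmul, kapL_tmul, LinearMap.flip_apply]
    rw [← A.alpha_mul]
  rw [hV2]
  -- step e: naturality of comm and collapse of the antipode pair
  have come : (TensorProduct.comm k H (H ⊗[k] H))
        ((TensorProduct.map A.α.symm.toLinearMap A.comul) (A.comul h))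
      = (TensorProduct.map A.comul A.α.symm.toLinearMap)
          ((TensorProduct.comm k H H) (A.comul h)) := by
    exact comm_map _ _ _
  rw [LinearMap.comp_apply, LinearEquiv.coe_coe, come, ← LinearMap.comp_apply,
    ← TensorProduct.map_comp]
  have hc1 : (A.α.toLinearMap ∘ₗ kapL A) ∘ₗ A.comul = A.counit.smulRight A.one := by
    ext z
    simp only [LinearMap.comp_apply, LinearMap.smulRight_apply, LinearEquiv.coe_coe]
    rw [kapL_comul, map_smul, A.alpha_one]
  have hc2 : ((B.lact.flip y) ∘ₗ A.α.toLinearMap ∘ₗ A.S) ∘ₗ A.α.symm.toLinearMap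
      = (B.lact.flip y) ∘ₗ A.S := by
    ext z
    simp only [LinearMap.comp_apply, LinearEquiv.coe_coe]
    rw [A.S_alpha_symm, A.α.apply_symm_apply]
  rw [hc1, hc2]
  -- step f: final counit evaluation
  have stepf : (TensorProduct.map (A.counit.smulRight A.one) ((B.lact.flip y) ∘ₗ A.S)) ∘ₗ
        (TensorProduct.comm k H H).toLinearMap
      = (TensorProduct.mk k H M A.one) ∘ₗ ((B.lact.flip y) ∘ₗ A.S) ∘ₗ
          (TensorProduct.rid k H).toLinearMap ∘ₗ
          (TensorProduct.map LinearMap.id A.counit) := by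
    apply TensorProduct.ext'; intro a b
    simp only [LinearMap.comp_apply, LinearEquiv.coe_coe, TensorProduct.comm_tmul,
      TensorProduct.map_tmul, LinearMap.smulRight_apply, LinearMap.id_apply,
      TensorProduct.rid_tmul, TensorProduct.mk_apply, LinearMap.flip_apply,
      TensorProduct.smul_tmul', map_smul]
  have := LinearMap.congr_fun stepf (A.comul h)
  simp only [LinearMap.comp_apply, LinearEquiv.coe_coe] at this
  rw [this, A.counit_comul_right]
  simp

theorem PL_mem (m : M) : B.PL m ∈ B.coinv := by
  show B.rho (B.PL m) = A.one ⊗ₜ[k] (B.μ.symm (B.PL m))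
  -- P1
  have P1 : B.rho ∘ₗ TensorProduct.lift (B.lact ∘ₗ A.S)
      = Kmap B ∘ₗ (TensorProduct.map LinearMap.id B.rho) := by
    apply TensorProduct.ext'; intro a x
    simp only [LinearMap.comp_apply, TensorProduct.lift.tmul, TensorProduct.map_tmul,
      LinearMap.id_apply, Kmap]
    rw [rho_lact]
  have h1 : B.rho (B.PL m)
      = Kmap B ((TensorProduct.map LinearMap.id B.rho) (B.rho m)) := by
    unfold PL
    rw [LinearMap.comp_apply, ← LinearMap.comp_apply B.rho, P1, LinearMap.comp_apply]
  rw [h1, B.rho_coassoc]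
  -- decompose the coassociativity expression
  have cch3 : (TensorProduct.map (TensorProduct.map A.α.toLinearMap LinearMap.id)
        LinearMap.id) ∘ₗ (TensorProduct.map A.comul B.μ.symm.toLinearMap)
      = TensorProduct.map ((TensorProduct.map A.α.toLinearMap LinearMap.id) ∘ₗ A.comul)
          B.μ.symm.toLinearMap := by
    rw [← TensorProduct.map_comp, LinearMap.id_comp]
  have dec : (TensorProduct.map
        ((TensorProduct.map A.α.toLinearMap LinearMap.id) ∘ₗ A.comul)
        B.μ.symm.toLinearMap) (B.rho m)
      = (TensorProduct.map (TensorProduct.map A.α.toLinearMap LinearMap.id)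
          LinearMap.id)
          ((TensorProduct.map A.comul B.μ.symm.toLinearMap) (B.rho m)) := by
    rw [← cch3, LinearMap.comp_apply]
  rw [dec]
  -- compute using Kmap_assoc and core on the element (map Δ μ⁻¹)(ρ m)
  have main : ∀ t : H ⊗[k] M,
      Kmap B ((TensorProduct.assoc k H H M)
        ((TensorProduct.map (TensorProduct.map A.α.toLinearMap LinearMap.id)
          LinearMap.id)
          ((TensorProduct.map A.comul B.μ.symm.toLinearMap) t)))
      = A.one ⊗ₜ[k] (TensorProduct.lift
          (((B.lact ∘ₗ A.S) ∘ₗ A.α.symm.toLinearMap).compl₂ B.μ.symm.toLinearMap) t) := by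
    intro t
    induction t using TensorProduct.induction_on with
    | zero => simp
    | tmul h x =>
      simp only [TensorProduct.map_tmul, LinearMap.id_apply, TensorProduct.lift.tmul,
        LinearMap.compl₂_apply, LinearMap.comp_apply, LinearEquiv.coe_coe]
      rw [Kmap_assoc, core]
    | add x y hx hy => simp only [map_add, hx, hy, TensorProduct.tmul_add]
  rw [main]
  congr 1
  -- identify with μ⁻¹ ∘ PL
  have e2 : B.μ.symm.toLinearMap ∘ₗ TensorProduct.lift (B.lact ∘ₗ A.S)
      = TensorProduct.lift
          (((B.lact ∘ₗ A.S) ∘ₗ A.α.symm.toLinearMap).compl₂ B.μ.symm.toLinearMap) := by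
    apply TensorProduct.ext'; intro a x
    simp only [LinearMap.comp_apply, TensorProduct.lift.tmul, LinearEquiv.coe_coe,
      LinearMap.compl₂_apply]
    rw [mu_lact_symm, A.S_alpha_symm]
  unfold PL
  rw [LinearMap.comp_apply]
  have := LinearMap.congr_fun e2 (B.rho m)
  simp only [LinearMap.comp_apply, LinearEquiv.coe_coe] at this
  exact this.symm

end LeftCovBimod

namespace LeftCovBimod
open MonHomHopf
variable {k H : Type*} [CommRing k] [AddCommGroup H] [Module k H]
  {A : MonHomHopf k H} {M : Type*} [AddCommGroup M] [Module k M] (B : LeftCovBimod A M)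

noncomputable def PLc : M →ₗ[k] B.coinv := B.PL.codRestrict B.coinv (PL_mem B)

@[simp] theorem PLc_val (m : M) : ((PLc B m : B.coinv) : M) = B.PL m := rfl

noncomputable def vartheta : M →ₗ[k] H ⊗[k] B.coinv :=
  (TensorProduct.map LinearMap.id (PLc B)) ∘ₗ B.rho

theorem vartheta_prop (m : M) :
    (TensorProduct.map (LinearMap.id : H →ₗ[k] H) (B.coinv).subtype) (vartheta B m)
      = (TensorProduct.map (LinearMap.id : H →ₗ[k] H) B.PL) (B.rho m) := by
  unfold vartheta
  rw [LinearMap.comp_apply, ← LinearMap.comp_apply, ← TensorProduct.map_comp,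
    LinearMap.id_comp]
  unfold PLc
  rw [LinearMap.subtype_comp_codRestrict]

@[simp] theorem theta_tmul (h : H) (u : B.coinv) :
    B.theta (h ⊗ₜ[k] u) = B.lact h (u : M) := by
  simp [theta]

theorem theta_vartheta (m : M) : B.theta (vartheta B m) = m := by
  unfold vartheta theta
  rw [LinearMap.comp_apply, ← LinearMap.comp_apply (TensorProduct.lift _)]
  have e1 : TensorProduct.lift (B.lact.compl₂ (B.coinv).subtype) ∘ₗ
        (TensorProduct.map LinearMap.id (PLc B))
      = TensorProduct.lift (B.lact.compl₂ B.PL) := by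
    apply TensorProduct.ext'; intro a x
    simp
  rw [e1]
  -- rewrite through K2
  set K2 : H ⊗[k] (H ⊗[k] M) →ₗ[k] M :=
    TensorProduct.lift (B.lact.compl₂ (TensorProduct.lift (B.lact ∘ₗ A.S))) with hK2
  have P2 : TensorProduct.lift (B.lact.compl₂ B.PL)
      = K2 ∘ₗ (TensorProduct.map LinearMap.id B.rho) := by
    apply TensorProduct.ext'; intro a x
    simp [hK2, PL]
  rw [P2, LinearMap.comp_apply, B.rho_coassoc]
  have cch3 : (TensorProduct.map (TensorProduct.map A.α.toLinearMap LinearMap.id)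
        LinearMap.id) ∘ₗ (TensorProduct.map A.comul B.μ.symm.toLinearMap)
      = TensorProduct.map ((TensorProduct.map A.α.toLinearMap LinearMap.id) ∘ₗ A.comul)
          B.μ.symm.toLinearMap := by
    rw [← TensorProduct.map_comp, LinearMap.id_comp]
  have dec : (TensorProduct.map
        ((TensorProduct.map A.α.toLinearMap LinearMap.id) ∘ₗ A.comul)
        B.μ.symm.toLinearMap) (B.rho m)
      = (TensorProduct.map (TensorProduct.map A.α.toLinearMap LinearMap.id)
          LinearMap.id)
          ((TensorProduct.map A.comul B.μ.symm.toLinearMap) (B.rho m)) := by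
    rw [← cch3, LinearMap.comp_apply]
  rw [dec]
  -- K2 after assoc
  have K2assoc : ∀ (s : H ⊗[k] H) (y : M),
      K2 ((TensorProduct.assoc k H H M) (s ⊗ₜ[k] y))
        = TensorProduct.lift (B.lact.compl₂ ((B.lact.flip y) ∘ₗ A.S)) s := by
    intro s y
    induction s using TensorProduct.induction_on with
    | zero => simp
    | tmul a b => simp [hK2]
    | add x y' hx hy => simp only [TensorProduct.add_tmul, map_add, LinearMap.add_apply,
        hx, hy]
  have core2 : ∀ (h : H) (y : M),
      TensorProduct.lift (B.lact.compl₂ ((B.lact.flip y) ∘ₗ A.S))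
          ((TensorProduct.map A.α.toLinearMap LinearMap.id) (A.comul h))
        = A.counit h • B.μ (B.μ y) := by
    intro h y
    have e : TensorProduct.lift (B.lact.compl₂ ((B.lact.flip y) ∘ₗ A.S)) ∘ₗ
          (TensorProduct.map A.α.toLinearMap LinearMap.id)
        = (B.lact.flip (B.μ y)) ∘ₗ kap A := by
      apply TensorProduct.ext'; intro a b
      simp only [LinearMap.comp_apply, TensorProduct.map_tmul, LinearMap.id_apply,
        TensorProduct.lift.tmul, LinearMap.compl₂_apply, LinearMap.flip_apply,
        LinearEquiv.coe_coe, kap_tmul]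
      rw [B.lact_assoc]
    rw [← LinearMap.comp_apply, e, LinearMap.comp_apply, kap_comul]
    simp [B.lact_one]
  have main : ∀ t : H ⊗[k] M,
      K2 ((TensorProduct.assoc k H H M)
        ((TensorProduct.map (TensorProduct.map A.α.toLinearMap LinearMap.id)
          LinearMap.id)
          ((TensorProduct.map A.comul B.μ.symm.toLinearMap) t)))
      = B.μ ((TensorProduct.lid k M)
          ((TensorProduct.map A.counit LinearMap.id) t)) := by
    intro t
    induction t using TensorProduct.induction_on with
    | zero => simp
    | tmul h x =>
      simp only [TensorProduct.map_tmul, LinearMap.id_apply, LinearEquiv.coe_coe,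
        TensorProduct.lid_tmul]
      rw [K2assoc, core2, B.μ.apply_symm_apply, map_smul]
    | add x y hx hy => simp only [map_add, hx, hy]
  rw [main, B.rho_counit, B.μ.apply_symm_apply]

theorem vartheta_theta (z : H ⊗[k] B.coinv) : vartheta B (B.theta z) = z := by
  induction z using TensorProduct.induction_on with
  | zero => simp
  | add x y hx hy => simp only [map_add, hx, hy]
  | tmul h u =>
    rw [theta_tmul]
    unfold vartheta
    rw [LinearMap.comp_apply, rho_lact_coinv B h u.2]
    rw [← LinearMap.comp_apply, ← TensorProduct.map_comp, LinearMap.id_comp]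
    have e1 : (PLc B) ∘ₗ (B.lact.flip (B.μ.symm (u : M)))
        = A.counit.smulRight u := by
      ext a
      simp only [LinearMap.comp_apply, LinearMap.flip_apply, PLc_val,
        LinearMap.smulRight_apply, SetLike.val_smul]
      rw [PL_lact_coinv B a (coinv_mu_symm B u.2), B.μ.apply_symm_apply]
    rw [e1]
    have e2 : (TensorProduct.map A.α.toLinearMap (A.counit.smulRight u))
        = ((TensorProduct.mk k H B.coinv).flip u) ∘ₗ A.α.toLinearMap ∘ₗ
            (TensorProduct.rid k H).toLinearMap ∘ₗ
            (TensorProduct.map LinearMap.id A.counit) := by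
      apply TensorProduct.ext'; intro a b
      simp only [TensorProduct.map_tmul, LinearMap.smulRight_apply, LinearMap.comp_apply,
        LinearMap.id_apply, LinearEquiv.coe_coe, TensorProduct.rid_tmul,
        TensorProduct.mk_apply, LinearMap.flip_apply, map_smul,
        TensorProduct.tmul_smul]
    rw [e2]
    simp only [LinearMap.comp_apply, LinearEquiv.coe_coe]
    rw [A.counit_comul_right, A.α.apply_symm_apply]
    rfl

theorem theta_bijective : Function.Bijective B.theta :=
  ⟨Function.LeftInverse.injective (vartheta_theta B),
   Function.RightInverse.surjective (theta_vartheta B)⟩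

end LeftCovBimod

namespace LeftCovBimod
open MonHomHopf
variable {k H : Type*} [CommRing k] [AddCommGroup H] [Module k H]
  {A : MonHomHopf k H} {M : Type*} [AddCommGroup M] [Module k M] (B : LeftCovBimod A M)

noncomputable def adcore (u : M) : H ⊗[k] H →ₗ[k] M :=
  TensorProduct.lift
    ((B.ract.comp ((B.lact.flip (B.μ.symm u)).comp A.S)).compl₂ A.α.toLinearMap)

@[simp] theorem adcore_tmul (u : M) (q w : H) :
    adcore B u (q ⊗ₜ[k] w) = B.ract (B.lact (A.S q) (B.μ.symm u)) (A.α w) := rfl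

theorem adRM_eq (u : M) (h : H) : B.adRM u h = adcore B u (A.comul h) := rfl

theorem tmul2_ract_one (v : M) (s : H ⊗[k] H) :
    tmul2 A.mul B.ract (A.one ⊗ₜ[k] v) s
      = (TensorProduct.map A.α.toLinearMap (B.ract v)) s := by
  induction s using TensorProduct.induction_on with
  | zero => simp
  | tmul a b => simp [A.one_mul']
  | add x y hx hy => simp only [map_add, hx, hy]

theorem adRM_coinv (h : H) {u : M} (hu : u ∈ B.coinv) : B.adRM u h ∈ B.coinv := by
  classical
  show B.rho (B.adRM u h) = A.one ⊗ₜ[k] (B.μ.symm (B.adRM u h))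
  set u2 : M := B.μ.symm (B.μ.symm u) with hu2
  set Pm : H ⊗[k] H →ₗ[k] H ⊗[k] H :=
    (TensorProduct.map A.α.toLinearMap A.α.toLinearMap) ∘ₗ
      (TensorProduct.comm k H H).toLinearMap ∘ₗ (TensorProduct.map A.S A.S) with hPm
  set Qm : H ⊗[k] H →ₗ[k] H ⊗[k] M :=
    TensorProduct.map A.α.toLinearMap (B.ract u2) with hQm
  set Xi5 : (H ⊗[k] H) ⊗[k] (H ⊗[k] H) →ₗ[k] H ⊗[k] M :=
    TensorProduct.lift (((tmul2 A.mul B.lact) ∘ₗ Pm).compl₂ Qm) with hXi5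
  -- A1 : rho ∘ adcore through Xi5
  have A1 : B.rho ∘ₗ adcore B u
      = Xi5 ∘ₗ (TensorProduct.map A.comul A.comul) := by
    apply TensorProduct.ext'; intro q w
    simp only [LinearMap.comp_apply, adcore_tmul, TensorProduct.map_tmul]
    rw [B.rho_cov, coinv_def B (coinv_mu_symm B hu)]
    rw [tmul2_ract_one]
    have : A.comul (A.α (A.S q)) = Pm (A.comul q) := by
      rw [A.comul_alpha, A.comul_S, hPm]
      simp only [LinearMap.comp_apply, LinearEquiv.coe_coe]
    rw [this]
    simp [hXi5, hQm, hu2]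
  have h0 : B.rho (B.adRM u h) = Xi5 ((TensorProduct.map A.comul A.comul) (A.comul h)) := by
    rw [adRM_eq, ← LinearMap.comp_apply, A1, LinearMap.comp_apply]
  -- re-associate with Hom-coassociativity (as in convB)
  set W' : H ⊗[k] H →ₗ[k] H ⊗[k] (H ⊗[k] H) :=
    TensorProduct.map LinearMap.id (A.comul ∘ₗ A.α.toLinearMap) with hW'
  have e2 : (TensorProduct.assoc k H H (H ⊗[k] H)).toLinearMap ∘ₗ
        TensorProduct.map A.comul A.comul
      = (TensorProduct.map LinearMap.id W') ∘ₗ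
          (TensorProduct.assoc k H H H).toLinearMap ∘ₗ
          TensorProduct.map A.comul A.α.symm.toLinearMap := by
    apply TensorProduct.ext'; intro g c
    simp only [LinearMap.comp_apply, TensorProduct.map_tmul, LinearEquiv.coe_coe]
    induction A.comul g using TensorProduct.induction_on with
    | zero => simp
    | tmul a b => simp [hW', A.α.apply_symm_apply]
    | add x y hx hy => simp only [TensorProduct.add_tmul, map_add, hx, hy]
  have Nform : ∀ c : H, W' (A.comul c)
      = (TensorProduct.map A.α.toLinearMap
          (TensorProduct.map A.α.toLinearMap A.α.toLinearMap))
          ((TensorProduct.assoc k H H H)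
            ((TensorProduct.map A.comul A.α.symm.toLinearMap) (A.comul c))) := by
    intro c
    rw [A.hom_coassoc]
    induction A.comul c using TensorProduct.induction_on with
    | zero => simp
    | tmul a b => simp [hW', A.comul_alpha, A.α.apply_symm_apply]
    | add x y hx hy => simp only [map_add, hx, hy]
  have h1 : B.rho (B.adRM u h)
      = Xi5 ((TensorProduct.assoc k H H (H ⊗[k] H)).symm
          ((TensorProduct.map LinearMap.id W')
            ((TensorProduct.map A.α.symm.toLinearMap A.comul) (A.comul h)))) := by
    rw [h0]
    have := LinearMap.congr_fun e2 (A.comul h)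
    simp only [LinearMap.comp_apply, LinearEquiv.coe_coe] at this
    rw [A.hom_coassoc] at this
    rw [← (TensorProduct.assoc k H H (H ⊗[k] H)).symm_apply_apply
      ((TensorProduct.map A.comul A.comul) (A.comul h)), this]
  rw [h1]
  -- pointwise evaluation as in core
  have L2 : ∀ (x c : H), Xi5 ((TensorProduct.assoc k H H (H ⊗[k] H)).symm
        (x ⊗ₜ[k] (W' (A.comul c))))
      = A.one ⊗ₜ[k] B.lact (A.S (A.α x)) (B.ract u2 (A.α.symm c)) := by
    intro x c
    set Gx : (H ⊗[k] H) ⊗[k] H →ₗ[k] H ⊗[k] M :=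
      Xi5 ∘ₗ (TensorProduct.assoc k H H (H ⊗[k] H)).symm.toLinearMap ∘ₗ
        (TensorProduct.mk k H (H ⊗[k] (H ⊗[k] H)) x) ∘ₗ
        (TensorProduct.map A.α.toLinearMap
          (TensorProduct.map A.α.toLinearMap A.α.toLinearMap)) ∘ₗ
        (TensorProduct.assoc k H H H).toLinearMap with hGx
    have step1 : Xi5 ((TensorProduct.assoc k H H (H ⊗[k] H)).symm
          (x ⊗ₜ[k] (W' (A.comul c))))
        = Gx ((TensorProduct.map A.comul A.α.symm.toLinearMap) (A.comul c)) := by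
      rw [Nform c]; simp [hGx]
    set Jx : H ⊗[k] H →ₗ[k] H ⊗[k] M :=
      TensorProduct.map (A.α.toLinearMap ∘ₗ A.α.toLinearMap)
        ((B.lact (A.α (A.S x))) ∘ₗ (B.ract u2) ∘ₗ A.α.toLinearMap) with hJx
    have L2a : Gx = Jx ∘ₗ (TensorProduct.map (kapL A) LinearMap.id) := by
      apply TensorProduct.ext_threefold; intro p q w
      simp only [hGx, hJx, LinearMap.comp_apply, LinearEquiv.coe_coe,
        TensorProduct.assoc_tmul, TensorProduct.map_tmul, TensorProduct.mk_apply,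
        TensorProduct.assoc_symm_tmul, hXi5, TensorProduct.lift.tmul,
        LinearMap.compl₂_apply, hPm, hQm, TensorProduct.comm_tmul, kapL_tmul,
        LinearMap.id_apply, tmul2_tmul']
      rw [A.S_alpha, ← A.alpha_mul, ← A.alpha_mul]
    have kapLC : (kapL A) ∘ₗ A.comul = A.counit.smulRight A.one :=
      LinearMap.ext fun z => by simpa using kapL_comul A z
    have comb : (TensorProduct.map (kapL A) LinearMap.id)
          ((TensorProduct.map A.comul A.α.symm.toLinearMap) (A.comul c))
        = (TensorProduct.map (A.counit.smulRight A.one) A.α.symm.toLinearMap)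
            (A.comul c) := by
      rw [← LinearMap.comp_apply, ← TensorProduct.map_comp, kapLC]
      simp
    have L2b : Jx ∘ₗ (TensorProduct.map (A.counit.smulRight A.one) A.α.symm.toLinearMap)
        = ((TensorProduct.mk k H M A.one)) ∘ₗ (B.lact (A.α (A.S x))) ∘ₗ (B.ract u2) ∘ₗ
            (TensorProduct.lid k H).toLinearMap ∘ₗ
            (TensorProduct.map A.counit LinearMap.id) := by
      apply TensorProduct.ext'; intro c1 c2
      simp only [hJx, LinearMap.comp_apply, TensorProduct.map_tmul, LinearEquiv.coe_coe,
        LinearMap.smulRight_apply, LinearMap.id_apply, TensorProduct.smul_tmul',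
        map_smul, TensorProduct.lid_tmul, TensorProduct.mk_apply]
      simp only [A.alpha_one, A.α.apply_symm_apply, map_smul,
        TensorProduct.tmul_smul, TensorProduct.smul_tmul']
    rw [step1, L2a, LinearMap.comp_apply, comb, ← LinearMap.comp_apply, L2b]
    simp only [LinearMap.comp_apply, LinearEquiv.coe_coe]
    rw [A.counit_comul_left, A.S_alpha]
    rfl
  -- assemble: evaluate on (map α.symm Δ)(Δ h)
  have main : ∀ t : H ⊗[k] H,
      Xi5 ((TensorProduct.assoc k H H (H ⊗[k] H)).symm
        ((TensorProduct.map LinearMap.id W')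
          ((TensorProduct.map A.α.symm.toLinearMap A.comul) t)))
      = A.one ⊗ₜ[k] (TensorProduct.lift
          ((B.lact ∘ₗ A.S).compl₂ ((B.ract u2) ∘ₗ A.α.symm.toLinearMap)) t) := by
    intro t
    induction t using TensorProduct.induction_on with
    | zero => simp
    | tmul g c =>
      simp only [TensorProduct.map_tmul, LinearMap.id_apply, LinearEquiv.coe_coe,
        TensorProduct.lift.tmul, LinearMap.compl₂_apply, LinearMap.comp_apply]
      rw [L2 (A.α.symm g) c, A.α.apply_symm_apply]
    | add x y hx hy => simp only [map_add, hx, hy, TensorProduct.tmul_add]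
  rw [main]
  congr 1
  -- identify with μ⁻¹ ∘ adcore
  have e3 : B.μ.symm.toLinearMap ∘ₗ adcore B u
      = TensorProduct.lift
          ((B.lact ∘ₗ A.S).compl₂ ((B.ract u2) ∘ₗ A.α.symm.toLinearMap)) := by
    apply TensorProduct.ext'; intro q w
    simp only [LinearMap.comp_apply, adcore_tmul, LinearEquiv.coe_coe,
      TensorProduct.lift.tmul, LinearMap.compl₂_apply]
    rw [mu_ract_symm, A.α.symm_apply_apply, mu_lact_symm]
    have := B.bimod (A.α.symm (A.S q)) u2 (A.α.symm w)
    rw [A.α.apply_symm_apply, A.α.apply_symm_apply] at this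
    rw [hu2] at this ⊢
    rw [this]
  rw [adRM_eq]
  have := LinearMap.congr_fun e3 (A.comul h)
  simp only [LinearMap.comp_apply, LinearEquiv.coe_coe] at this
  exact this.symm

end LeftCovBimod

namespace LeftCovBimod
open MonHomHopf
variable {k H : Type*} [CommRing k] [AddCommGroup H] [Module k H]
  {A : MonHomHopf k H} {M : Type*} [AddCommGroup M] [Module k M] (B : LeftCovBimod A M)

theorem ract_compat (h l : H) (u : M) :
    TensorProduct.lift ((B.lact.comp (A.mul h)).compl₂ (B.adRM u)) (A.comul l)
      = B.ract (B.lact h u) l := by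
  set Lam : H ⊗[k] (H ⊗[k] H) →ₗ[k] M :=
    TensorProduct.lift ((B.lact.comp (A.mul h)).compl₂ (adcore B u)) with hLam
  have e1 : TensorProduct.lift ((B.lact.comp (A.mul h)).compl₂ (B.adRM u))
      = Lam ∘ₗ (TensorProduct.map LinearMap.id A.comul) := by
    apply TensorProduct.ext'; intro a b
    simp [hLam, adRM_eq]
  rw [e1, LinearMap.comp_apply]
  -- re-associate
  have cc : (TensorProduct.map A.α.toLinearMap LinearMap.id) ∘ₗ
        (TensorProduct.map A.α.symm.toLinearMap A.comul)
      = TensorProduct.map LinearMap.id A.comul := by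
    rw [← TensorProduct.map_comp]
    congr 1
    ext z; simp
  have mid : (TensorProduct.map LinearMap.id A.comul) (A.comul l)
      = (TensorProduct.map A.α.toLinearMap LinearMap.id)
          ((TensorProduct.assoc k H H H)
            ((TensorProduct.map A.comul A.α.symm.toLinearMap) (A.comul l))) := by
    rw [A.hom_coassoc, ← cc, LinearMap.comp_apply]
  rw [mid]
  set Lam' : (H ⊗[k] H) ⊗[k] H →ₗ[k] M :=
    (B.lact (A.α h)) ∘ₗ
      TensorProduct.lift (B.lact.compl₂ (B.ract (B.μ.symm u))) ∘ₗ
      (TensorProduct.map (kap A) LinearMap.id) with hLam'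
  have E : Lam ∘ₗ (TensorProduct.map A.α.toLinearMap LinearMap.id) ∘ₗ
        (TensorProduct.assoc k H H H).toLinearMap = Lam' := by
    apply TensorProduct.ext_threefold; intro p q w
    simp only [hLam, hLam', LinearMap.comp_apply, LinearEquiv.coe_coe,
      TensorProduct.assoc_tmul, TensorProduct.map_tmul, LinearMap.id_apply,
      TensorProduct.lift.tmul, LinearMap.compl₂_apply, adcore_tmul, kap_tmul]
    rw [B.bimod]
    rw [show B.ract (B.μ.symm u) w
        = B.μ (B.ract (B.μ.symm (B.μ.symm u)) (A.α.symm w)) from by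
      rw [B.mu_ract, A.α.apply_symm_apply, B.μ.apply_symm_apply]]
    rw [← B.mu_lact, ← B.lact_assoc, ← B.lact_assoc]
  have happ := LinearMap.congr_fun E
    ((TensorProduct.map A.comul A.α.symm.toLinearMap) (A.comul l))
  simp only [LinearMap.comp_apply, LinearEquiv.coe_coe] at happ
  rw [happ, hLam']
  simp only [LinearMap.comp_apply]
  have comb : (TensorProduct.map (kap A) LinearMap.id)
        ((TensorProduct.map A.comul A.α.symm.toLinearMap) (A.comul l))
      = (TensorProduct.map (A.counit.smulRight A.one) A.α.symm.toLinearMap)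
          (A.comul l) := by
    rw [← LinearMap.comp_apply, ← TensorProduct.map_comp, kap_comul_comp]
    simp
  rw [comb]
  have efin : TensorProduct.lift (B.lact.compl₂ (B.ract (B.μ.symm u))) ∘ₗ
        (TensorProduct.map (A.counit.smulRight A.one) A.α.symm.toLinearMap)
      = B.μ.toLinearMap ∘ₗ (B.ract (B.μ.symm u)) ∘ₗ A.α.symm.toLinearMap ∘ₗ
          (TensorProduct.lid k H).toLinearMap ∘ₗ
          (TensorProduct.map A.counit LinearMap.id) := by
    apply TensorProduct.ext'; intro c1 c2
    simp only [LinearMap.comp_apply, TensorProduct.map_tmul, LinearEquiv.coe_coe,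
      LinearMap.smulRight_apply, LinearMap.id_apply, TensorProduct.smul_tmul',
      TensorProduct.lift.tmul, LinearMap.compl₂_apply, TensorProduct.lid_tmul,
      map_smul, LinearMap.smul_apply]
    rw [B.lact_one]
  have happ2 := LinearMap.congr_fun efin (A.comul l)
  simp only [LinearMap.comp_apply, LinearEquiv.coe_coe] at happ2 ⊢
  rw [happ2, A.counit_comul_left, B.mu_ract, B.μ.apply_symm_apply, A.α.apply_symm_apply]
  have := B.bimod h u (A.α.symm l)
  rw [A.α.apply_symm_apply] at this
  rw [← this]

end LeftCovBimod

theorem theta_isomorphism' {k H : Type*} [CommRing k] [AddCommGroup H] [Module k H]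
    (A : MonHomHopf k H) {M : Type*} [AddCommGroup M] [Module k M]
    (B : LeftCovBimod A M) :
    (∀ h : H, ∀ u : M, u ∈ B.coinv → B.adRM u h ∈ B.coinv) ∧
    Function.Bijective B.theta ∧
    (∃ ϑ : M →ₗ[k] H ⊗[k] ↥(B.coinv),
      (∀ m, (TensorProduct.map (LinearMap.id : H →ₗ[k] H) (B.coinv).subtype) (ϑ m)
          = (TensorProduct.map (LinearMap.id : H →ₗ[k] H) B.PL) (B.rho m)) ∧
      Function.LeftInverse ϑ B.theta ∧ Function.RightInverse ϑ B.theta) ∧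
    (∀ g h : H, ∀ u ∈ B.coinv,
      B.lact (A.mul (A.α.symm g) h) (B.μ u) = B.lact g (B.lact h u)) ∧
    (∀ h l : H, ∀ u ∈ B.coinv,
      TensorProduct.lift ((B.lact.comp (A.mul h)).compl₂ (B.adRM u)) (A.comul l)
        = B.ract (B.lact h u) l) ∧
    (∀ h : H, ∀ u ∈ B.coinv,
      B.rho (B.lact h u)
        = (TensorProduct.map A.α.toLinearMap (B.lact.flip (B.μ.symm u))) (A.comul h)) := by
  refine ⟨fun h u hu => B.adRM_coinv h hu,
    B.theta_bijective,
    ⟨B.vartheta, B.vartheta_prop, B.vartheta_theta, B.theta_vartheta⟩,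
    ?_, fun h l u _ => B.ract_compat h l u,
    fun h u hu => B.rho_lact_coinv h hu⟩
  intro g h u _
  have := B.lact_assoc (A.α.symm g) h u
  rw [A.α.apply_symm_apply] at this
  exact this.symm

/-- `θ(h ⊗ u) = h·u` is an isomorphism of left-covariant Hom-bimodules from
`H ⊗ ᶜᵒᴴM` (with the right adjoint action on coinvariants) onto `M`, with inverse
`ϑ(m) = m₍₋₁₎ ⊗ S(m₍₀₎₍₋₁₎)·m₍₀₎₍₀₎`. -/
theorem theta_isomorphism {k H : Type*} [CommRing k] [AddCommGroup H] [Module k H]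
    (A : MonHomHopf k H) {M : Type*} [AddCommGroup M] [Module k M]
    (B : LeftCovBimod A M) :
    (∀ h : H, ∀ u : M, u ∈ B.coinv → B.adRM u h ∈ B.coinv) ∧
    Function.Bijective B.theta ∧
    (∃ ϑ : M →ₗ[k] H ⊗[k] ↥(B.coinv),
      (∀ m, (TensorProduct.map (LinearMap.id : H →ₗ[k] H) (B.coinv).subtype) (ϑ m)
          = (TensorProduct.map (LinearMap.id : H →ₗ[k] H) B.PL) (B.rho m)) ∧
      Function.LeftInverse ϑ B.theta ∧ Function.RightInverse ϑ B.theta) ∧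
    (∀ g h : H, ∀ u ∈ B.coinv,
      B.lact (A.mul (A.α.symm g) h) (B.μ u) = B.lact g (B.lact h u)) ∧
    (∀ h l : H, ∀ u ∈ B.coinv,
      TensorProduct.lift ((B.lact.comp (A.mul h)).compl₂ (B.adRM u)) (A.comul l)
        = B.ract (B.lact h u) l) ∧
    (∀ h : H, ∀ u ∈ B.coinv,
      B.rho (B.lact h u)
        = (TensorProduct.map A.α.toLinearMap (B.lact.flip (B.μ.symm u))) (A.comul h)) := by
  exact theta_isomorphism' A B
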